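/- arXiv:math/0106113 — 2 statements merged into one kernel-verified Lean document; each statement's English description precedes it below -/
import Mathlib

section
/- Let ν > 0, T > 0, let u : ℝ³ × [0,T] → ℝ³ be continuous and bounded, and let C ≥ 0. Suppose Z : ℝ³ × [0,T] → M₃(ℝ) is continuous and bounded, is C^∞ on ℝ³ × (0,T], satisfies Z(x,0) = 0 for all x, and satisfies the pointwise differential inequality ‖∂Z/∂t + (u·∇)Z − νΔZ‖ ≤ C ‖Z‖ on ℝ³ × (0,T], where ‖·‖ is the Frobenius norm of a 3×3 matrix and the operator acts entrywise. Then Z ≡ 0 on ℝ³ × [0,T]. -/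
open Set Filter

noncomputable section

/-- Spatial partial derivative in the `j`-th coordinate direction. -/
def pd (j : Fin 3) (φ : (Fin 3 → ℝ) → ℝ) (x : Fin 3 → ℝ) : ℝ :=
  fderiv ℝ φ x (Pi.single j 1)

/-- Spatial Laplacian. -/
def lap (φ : (Fin 3 → ℝ) → ℝ) (x : Fin 3 → ℝ) : ℝ :=
  ∑ j, pd j (fun y => pd j φ y) x

/-- Frobenius norm of a `3 × 3` real matrix. -/
def frobNorm (M : Matrix (Fin 3) (Fin 3) ℝ) : ℝ :=
  Real.sqrt (∑ i, ∑ j, (M i j) ^ 2)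

open Topology

namespace NSUniqAux


abbrev XX := Fin 3 → ℝ

lemma hasDerivAt_slice {φ : XX → ℝ} (hφ : Differentiable ℝ φ) (x e : XX) (s : ℝ) :
    HasDerivAt (fun s' : ℝ => φ (x + s' • e)) (fderiv ℝ φ (x + s • e) e) s := by
  have h1 : HasDerivAt (fun s' : ℝ => x + s' • e) e s := by
    simpa using ((hasDerivAt_id s).smul_const e).const_add x
  have h2 := (hφ (x + s • e)).hasFDerivAt.comp_hasDerivAt s h1
  simpa [Function.comp_def] using h2

lemma hasDerivAt_slice_pd {φ : XX → ℝ} (hφ : Differentiable ℝ φ) (x : XX) (k : Fin 3) (s : ℝ) :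
    HasDerivAt (fun s' : ℝ => φ (x + s' • (Pi.single k 1 : XX))) (pd k φ (x + s • (Pi.single k 1 : XX))) s :=
  hasDerivAt_slice hφ x _ s

lemma deriv_slice {φ : XX → ℝ} (hφ : Differentiable ℝ φ) (x : XX) (k : Fin 3) (s : ℝ) :
    deriv (fun s' : ℝ => φ (x + s' • (Pi.single k 1 : XX))) s = pd k φ (x + s • (Pi.single k 1 : XX)) :=
  (hasDerivAt_slice_pd hφ x k s).deriv

lemma contDiff_pd {φ : XX → ℝ} (hφ : ContDiff ℝ (⊤:ℕ∞) φ) (k : Fin 3) :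
    ContDiff ℝ (⊤:ℕ∞) (fun y => pd k φ y) := by
  have h := hφ.fderiv_right (m := (⊤:ℕ∞)) (by exact_mod_cast le_top)
  exact (ContinuousLinearMap.apply ℝ ℝ (Pi.single k 1 : XX)).contDiff.comp h

lemma deriv2_nonpos {f : ℝ → ℝ} (hf : ContDiff ℝ (⊤:ℕ∞) f) (hmax : IsLocalMax f 0) :
    deriv (deriv f) 0 ≤ 0 := by
  by_contra hlt
  push_neg at hlt
  obtain ⟨hdiff, hder⟩ := contDiff_infty_iff_deriv.mp hf
  have hd0 : deriv f 0 = 0 := hmax.deriv_eq_zero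
  have hdd : HasDerivAt (deriv f) (deriv (deriv f) 0) 0 :=
    ((contDiff_infty_iff_deriv.mp hder).1 0).hasDerivAt
  have h1 : ∀ᶠ t in 𝓝[>] (0:ℝ), 0 < deriv f t := by
    have h2 := (hdd.hasDerivWithinAt (s := Ioi (0:ℝ)))
    rw [hasDerivWithinAt_iff_tendsto_slope] at h2
    rw [show Ioi (0:ℝ) \ {0} = Ioi 0 by simp] at h2
    have hslope : ∀ᶠ t in 𝓝[Ioi (0:ℝ)] 0, 0 < slope (deriv f) 0 t :=
      h2.eventually (eventually_gt_nhds hlt)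
    filter_upwards [hslope, eventually_mem_nhdsWithin] with t ht hmem
    rw [slope_def_field, hd0, sub_zero, sub_zero] at ht
    have htpos : (0:ℝ) < t := hmem
    have := mul_pos htpos ht
    rwa [mul_div_cancel₀ _ (ne_of_gt htpos)] at this
  have h2 : ∀ᶠ t in 𝓝[>] (0:ℝ), f t ≤ f 0 := hmax.filter_mono nhdsWithin_le_nhds
  obtain ⟨δ, hδ, hsub⟩ := mem_nhdsGT_iff_exists_Ioo_subset.mp (h1.and h2)
  have hδ0 : (0:ℝ) < δ := hδ
  have hmono : StrictMonoOn f (Icc 0 (δ/2)) := by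
    apply strictMonoOn_of_deriv_pos (convex_Icc _ _) (hdiff.continuous.continuousOn)
    intro t ht
    rw [interior_Icc] at ht
    exact (hsub ⟨ht.1, lt_trans ht.2 (by linarith)⟩).1
  have hlt2 : f 0 < f (δ/2) := hmono ⟨le_refl _, by linarith⟩ ⟨by linarith, le_refl _⟩ (by linarith)
  have : f (δ/2) ≤ f 0 := (hsub ⟨by linarith, by linarith⟩).2
  linarith

lemma deriv_left_nonneg {ψ : ℝ → ℝ} {d t₀ T : ℝ} (ht0 : 0 < t₀) (htT : t₀ ≤ T)
    (h : HasDerivWithinAt ψ d (Iic T) t₀)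
    (hmax : ∀ t ∈ Icc (0:ℝ) T, ψ t ≤ ψ t₀) : 0 ≤ d := by
  have h' : HasDerivWithinAt ψ d (Iio t₀) t₀ := h.mono (fun s hs => le_trans (le_of_lt hs) htT)
  rw [hasDerivWithinAt_iff_tendsto_slope] at h'
  rw [show Iio t₀ \ {t₀} = Iio t₀ by simp [Set.diff_singleton_eq_self]] at h'
  refine ge_of_tendsto h' ?_
  have hev : ∀ᶠ t in 𝓝[Iio t₀] t₀, (0:ℝ) < t :=
    (eventually_gt_nhds ht0).filter_mono nhdsWithin_le_nhds
  filter_upwards [eventually_mem_nhdsWithin, hev] with t hmem htpos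
  rw [slope_def_field]
  have h1 : ψ t ≤ ψ t₀ := hmax t ⟨le_of_lt htpos, le_trans (le_of_lt hmem) htT⟩
  have h2 : t - t₀ < 0 := sub_neg.mpr hmem
  have := div_nonneg (neg_nonneg.2 (sub_nonpos.2 h1)) (neg_nonneg.2 (le_of_lt h2))
  rwa [neg_div_neg_eq] at this

lemma sum33_mul (c : ℝ) (f : Fin 3 → Fin 3 → ℝ) :
    ∑ i, ∑ j, c * f i j = c * ∑ i, ∑ j, f i j := by
  rw [Finset.mul_sum]
  exact Finset.sum_congr rfl fun i _ => (Finset.mul_sum _ _ _).symm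


lemma sum33_add (f g : Fin 3 → Fin 3 → ℝ) :
    ∑ i, ∑ j, (f i j + g i j) = (∑ i, ∑ j, f i j) + (∑ i, ∑ j, g i j) := by
  simp [Finset.sum_add_distrib]

lemma sum33_sub (f g : Fin 3 → Fin 3 → ℝ) :
    ∑ i, ∑ j, (f i j - g i j) = (∑ i, ∑ j, f i j) - (∑ i, ∑ j, g i j) := by
  simp [Finset.sum_sub_distrib]

lemma sum_swap_313 (f : Fin 3 → Fin 3 → Fin 3 → ℝ) :
    ∑ k, ∑ i, ∑ j, f k i j = ∑ i, ∑ j, ∑ k, f k i j := by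
  rw [Finset.sum_comm]
  exact Finset.sum_congr rfl fun i _ => Finset.sum_comm

lemma key_spatial
    (φ : Fin 3 → Fin 3 → XX → ℝ) (hφ : ∀ i j, ContDiff ℝ (⊤:ℕ∞) (φ i j))
    (E F : ℝ) (x₀ : XX)
    (hmax : ∀ y : XX, E * (∑ i, ∑ j, (φ i j y)^2) - F * (1 + ∑ i, (y i)^2)
          ≤ E * (∑ i, ∑ j, (φ i j x₀)^2) - F * (1 + ∑ i, (x₀ i)^2)) :
    (∀ k, E * (∑ i, ∑ j, 2 * φ i j x₀ * pd k (φ i j) x₀) - F * (2 * x₀ k) = 0)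
    ∧ ∀ k, E * (∑ i, ∑ j, (2 * pd k (φ i j) x₀ * pd k (φ i j) x₀
        + 2 * φ i j x₀ * pd k (fun y => pd k (φ i j) y) x₀)) - F * 2 ≤ 0 := by
  have hdiff : ∀ i j, Differentiable ℝ (φ i j) :=
    fun i j => (hφ i j).differentiable (by simp)
  have hdiffpd : ∀ i j k, Differentiable ℝ (fun y => pd k (φ i j) y) :=
    fun i j k => (contDiff_pd (hφ i j) k).differentiable (by simp)
  have main : ∀ k : Fin 3,
      (E * (∑ i, ∑ j, 2 * φ i j x₀ * pd k (φ i j) x₀) - F * (2 * x₀ k) = 0)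
      ∧ (E * (∑ i, ∑ j, (2 * pd k (φ i j) x₀ * pd k (φ i j) x₀
          + 2 * φ i j x₀ * pd k (fun y => pd k (φ i j) y) x₀)) - F * 2 ≤ 0) := by
    intro k
    set e : XX := (Pi.single k 1 : XX) with he
    have h0e : x₀ + (0:ℝ) • e = x₀ := by simp
    have hproj : ∀ (i : Fin 3) (s : ℝ), HasDerivAt (fun s' : ℝ => (x₀ + s' • e) i) (e i) s := by
      intro i s
      have h : HasDerivAt (fun s' : ℝ => x₀ i + s' * e i) (e i) s := by
        simpa using ((hasDerivAt_id s).mul_const (e i)).const_add (x₀ i)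
      simpa [Pi.add_apply, Pi.smul_apply, smul_eq_mul] using h
    -- the sliced function and its first derivative
    have hs1 : ∀ s : ℝ, HasDerivAt
        (fun s' : ℝ => E * (∑ i, ∑ j, (φ i j (x₀ + s' • e))^2) - F * (1 + ∑ i, ((x₀ + s' • e) i)^2))
        (E * (∑ i, ∑ j, 2 * φ i j (x₀ + s • e) * pd k (φ i j) (x₀ + s • e))
          - F * (∑ i, 2 * ((x₀ + s • e) i) * e i)) s := by
      intro s
      have hsum1 : HasDerivAt (fun s' : ℝ => ∑ i, ∑ j, (φ i j (x₀ + s' • e))^2)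
          (∑ i, ∑ j, 2 * φ i j (x₀ + s • e) * pd k (φ i j) (x₀ + s • e)) s := by
        apply HasDerivAt.fun_sum; intro i _; apply HasDerivAt.fun_sum; intro j _
        simpa [pow_one] using (hasDerivAt_slice_pd (hdiff i j) x₀ k s).fun_pow 2
      have hsum2 : HasDerivAt (fun s' : ℝ => 1 + ∑ i, ((x₀ + s' • e) i)^2)
          (∑ i, 2 * ((x₀ + s • e) i) * e i) s := by
        apply HasDerivAt.const_add
        apply HasDerivAt.fun_sum; intro i _
        simpa [pow_one] using (hproj i s).fun_pow 2
      exact (hsum1.const_mul E).sub (hsum2.const_mul F)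
    have hA : deriv (fun s' : ℝ => E * (∑ i, ∑ j, (φ i j (x₀ + s' • e))^2)
          - F * (1 + ∑ i, ((x₀ + s' • e) i)^2))
        = fun s : ℝ => E * (∑ i, ∑ j, 2 * φ i j (x₀ + s • e) * pd k (φ i j) (x₀ + s • e))
          - F * (∑ i, 2 * ((x₀ + s • e) i) * e i) := funext fun s => (hs1 s).deriv
    have hlm : IsLocalMax (fun s' : ℝ => E * (∑ i, ∑ j, (φ i j (x₀ + s' • e))^2)
        - F * (1 + ∑ i, ((x₀ + s' • e) i)^2)) 0 := by
      apply Eventually.of_forall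
      intro s
      simp only [h0e]
      exact hmax _
    have hsingle : (∑ i, 2 * (x₀ i) * e i) = 2 * x₀ k := by
      rw [he]
      simp [Pi.single_apply, mul_ite, Finset.sum_ite_eq']
    constructor
    · have hz := hlm.deriv_eq_zero
      rw [hA] at hz
      simp only [h0e] at hz
      rw [hsingle] at hz
      exact hz
    · -- second derivative
      have hs2 : HasDerivAt (fun s : ℝ => E * (∑ i, ∑ j, 2 * φ i j (x₀ + s • e) * pd k (φ i j) (x₀ + s • e))
          - F * (∑ i, 2 * ((x₀ + s • e) i) * e i))
          (E * (∑ i, ∑ j, (2 * pd k (φ i j) x₀ * pd k (φ i j) x₀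
            + 2 * φ i j x₀ * pd k (fun y => pd k (φ i j) y) x₀))
            - F * (∑ i, 2 * e i * e i)) 0 := by
        have hsum1 : HasDerivAt (fun s : ℝ => ∑ i, ∑ j, 2 * φ i j (x₀ + s • e) * pd k (φ i j) (x₀ + s • e))
            (∑ i, ∑ j, (2 * pd k (φ i j) x₀ * pd k (φ i j) x₀
              + 2 * φ i j x₀ * pd k (fun y => pd k (φ i j) y) x₀)) 0 := by
          apply HasDerivAt.fun_sum; intro i _; apply HasDerivAt.fun_sum; intro j _
          have h1 := (hasDerivAt_slice_pd (hdiff i j) x₀ k 0).const_mul 2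
          have h2 := hasDerivAt_slice_pd (hdiffpd i j k) x₀ k 0
          have h3 := h1.fun_mul h2
          simpa [h0e] using h3
        have hsum2 : HasDerivAt (fun s : ℝ => ∑ i, 2 * ((x₀ + s • e) i) * e i)
            (∑ i, 2 * e i * e i) 0 := by
          apply HasDerivAt.fun_sum; intro i _
          exact ((hproj i 0).const_mul 2).mul_const (e i)
        exact (hsum1.const_mul E).sub (hsum2.const_mul F)
      have hcurve : ContDiff ℝ (⊤:ℕ∞) (fun s : ℝ => x₀ + s • e) :=
        contDiff_const.add (contDiff_id.smul contDiff_const)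
      have hVc : ContDiff ℝ (⊤:ℕ∞) (fun y : XX => E * (∑ i, ∑ j, (φ i j y)^2) - F * (1 + ∑ i, (y i)^2)) := by
        apply ContDiff.sub
        · exact contDiff_const.mul (ContDiff.sum fun i _ => ContDiff.sum fun j _ => (hφ i j).pow 2)
        · apply ContDiff.mul contDiff_const
          apply ContDiff.add contDiff_const
          apply ContDiff.sum
          intro i _
          exact ((ContinuousLinearMap.proj i : XX →L[ℝ] ℝ).contDiff).pow 2
      have hfc : ContDiff ℝ (⊤:ℕ∞) (fun s' : ℝ => E * (∑ i, ∑ j, (φ i j (x₀ + s' • e))^2)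
          - F * (1 + ∑ i, ((x₀ + s' • e) i)^2)) := hVc.comp hcurve
      have h2le := deriv2_nonpos hfc hlm
      rw [hA] at h2le
      rw [hs2.deriv] at h2le
      have hee : (∑ i, 2 * e i * e i) = (2:ℝ) := by
        rw [he]; simp [Pi.single_apply, mul_ite, Finset.sum_ite_eq']
      rw [hee] at h2le
      exact h2le
  exact ⟨fun k => (main k).1, fun k => (main k).2⟩

end NSUniqAux

open NSUniqAux

set_option maxHeartbeats 1600000 in
/-- A bounded continuous matrix-valued function `Z`, smooth for `t > 0`, vanishing at
`t = 0` and satisfying the differential inequality `‖ΓZ‖ ≤ C‖Z‖` (with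
`Γ = ∂ₜ + u·∇ − νΔ`, entrywise) is identically zero. -/
theorem uniqueness_from_differential_inequality
    (ν T C : ℝ) (hν : 0 < ν) (hT : 0 < T) (hC : 0 ≤ C)
    (u : (Fin 3 → ℝ) → ℝ → (Fin 3 → ℝ))
    (hu_cont : ContinuousOn (fun q : (Fin 3 → ℝ) × ℝ => u q.1 q.2) (univ ×ˢ Icc 0 T))
    (hu_bdd : ∃ Cu : ℝ, ∀ (x : Fin 3 → ℝ), ∀ t ∈ Icc (0 : ℝ) T, ∀ i : Fin 3,
      |u x t i| ≤ Cu)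
    (Z : (Fin 3 → ℝ) → ℝ → Matrix (Fin 3) (Fin 3) ℝ)
    (hZ_cont : ∀ i j : Fin 3,
      ContinuousOn (fun q : (Fin 3 → ℝ) × ℝ => Z q.1 q.2 i j) (univ ×ˢ Icc 0 T))
    (hZ_bdd : ∃ CZ : ℝ, ∀ (x : Fin 3 → ℝ), ∀ t ∈ Icc (0 : ℝ) T,
      frobNorm (Z x t) ≤ CZ)
    (hZ_smooth : ∀ i j : Fin 3,
      ContDiffOn ℝ (⊤ : ℕ∞) (fun q : (Fin 3 → ℝ) × ℝ => Z q.1 q.2 i j) (univ ×ˢ Ioc 0 T))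
    (hZ_init : ∀ x, Z x 0 = 0)
    (hZ_ineq : ∀ (x : Fin 3 → ℝ), ∀ t ∈ Ioc (0 : ℝ) T,
      frobNorm (Matrix.of fun i j =>
          derivWithin (fun s => Z x s i j) (Iic T) t
            + (∑ k, u x t k * pd k (fun y => Z y t i j) x)
            - ν * lap (fun y => Z y t i j) x)
        ≤ C * frobNorm (Z x t)) :
    ∀ (x : Fin 3 → ℝ), ∀ t ∈ Icc (0 : ℝ) T, Z x t = 0 := by
  obtain ⟨Cu₀, hCu₀⟩ := hu_bdd
  obtain ⟨CZ₀, hCZ₀⟩ := hZ_bdd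
  set Cu : ℝ := max Cu₀ 0 with hCu_def
  have hCu0 : (0:ℝ) ≤ Cu := le_max_right _ _
  have hCu : ∀ x, ∀ t ∈ Icc (0:ℝ) T, ∀ i, |u x t i| ≤ Cu :=
    fun x t ht i => (hCu₀ x t ht i).trans (le_max_left _ _)
  set B : ℝ := (max CZ₀ 0)^2 with hB_def
  have hB0 : (0:ℝ) ≤ B := sq_nonneg _
  have hWB : ∀ x, ∀ t ∈ Icc (0:ℝ) T, (∑ i, ∑ j, (Z x t i j)^2) ≤ B := by
    intro x t ht
    have h2 : (0:ℝ) ≤ ∑ i, ∑ j, (Z x t i j)^2 := by positivity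
    have h3 : Real.sqrt (∑ i, ∑ j, (Z x t i j)^2) ≤ max CZ₀ 0 := by
      refine le_trans ?_ (le_max_left _ _)
      exact hCZ₀ x t ht
    have h4 := Real.sq_sqrt h2
    rw [hB_def]
    nlinarith [Real.sqrt_nonneg (∑ i, ∑ j, (Z x t i j)^2)]
  set K : ℝ := 1 + 3 * Cu^2 + 6 * ν with hK_def
  have hK1 : (1:ℝ) ≤ K := by rw [hK_def]; nlinarith
  have hK0 : (0:ℝ) ≤ K := by linarith
  -- slice smoothness in space
  have hφs : ∀ t₀ ∈ Ioc (0:ℝ) T, ∀ i j, ContDiff ℝ (⊤:ℕ∞) (fun y => Z y t₀ i j) := by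
    intro t₀ ht₀ i j
    have hmap : MapsTo (fun y : Fin 3 → ℝ => (y, t₀)) univ (univ ×ˢ Ioc 0 T) :=
      fun y _ => ⟨mem_univ _, ht₀⟩
    have h0 : ContDiffOn ℝ (⊤:ℕ∞) (fun q : (Fin 3 → ℝ) × ℝ => Z q.1 q.2 i j)
        (univ ×ˢ Ioc 0 T) := (hZ_smooth i j).of_le (by simp)
    have hpr : ContDiff ℝ (⊤:ℕ∞) (fun y : Fin 3 → ℝ => (y, t₀)) :=
      contDiff_id.prodMk contDiff_const
    have h := h0.comp hpr.contDiffOn hmap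
    rw [contDiffOn_univ] at h
    exact h
  -- time differentiability
  have hζ : ∀ (x : Fin 3 → ℝ) (i j : Fin 3), ∀ t₀ ∈ Ioc (0:ℝ) T,
      DifferentiableWithinAt ℝ (fun s => Z x s i j) (Iic T) t₀ := by
    intro x i j t₀ ht₀
    have hmap : MapsTo (fun s : ℝ => (x, s)) (Ioc (0:ℝ) T) (univ ×ˢ Ioc 0 T) :=
      fun s hs => ⟨mem_univ _, hs⟩
    have h0 : ContDiffOn ℝ (⊤:ℕ∞) (fun q : (Fin 3 → ℝ) × ℝ => Z q.1 q.2 i j)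
        (univ ×ˢ Ioc 0 T) := (hZ_smooth i j).of_le (by simp)
    have hpr : ContDiff ℝ (⊤:ℕ∞) (fun s : ℝ => ((x, s) : (Fin 3 → ℝ) × ℝ)) :=
      contDiff_const.prodMk contDiff_id
    have h1 : ContDiffOn ℝ (⊤:ℕ∞) (fun s => Z x s i j) (Ioc 0 T) :=
      h0.comp hpr.contDiffOn hmap
    have h2 : DifferentiableWithinAt ℝ (fun s => Z x s i j) (Ioc 0 T) t₀ :=
      (h1.differentiableOn (by simp)) t₀ ht₀
    have hset : Ioc (0:ℝ) T =ᶠ[𝓝 t₀] Iic T := by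
      filter_upwards [Ioi_mem_nhds ht₀.1] with s hs
      simp only [mem_Ioc, mem_Iic, eq_iff_iff]
      exact ⟨fun h => h.2, fun h => ⟨hs, h⟩⟩
    exact (differentiableWithinAt_congr_set hset).mp h2
  intro x₁ t₁ ht₁
  by_contra hne
  have hentry : ∃ i j, Z x₁ t₁ i j ≠ 0 := by
    by_contra hall
    push_neg at hall
    exact hne (Matrix.ext fun i j => by simpa using hall i j)
  set W₁ : ℝ := ∑ i, ∑ j, (Z x₁ t₁ i j)^2 with hW₁def
  have hW₁pos : 0 < W₁ := by
    obtain ⟨i, j, hij⟩ := hentry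
    rw [hW₁def]
    refine Finset.sum_pos' (fun i _ => Finset.sum_nonneg fun j _ => sq_nonneg _) ?_
    exact ⟨i, Finset.mem_univ _, Finset.sum_pos'
      (fun j _ => sq_nonneg _) ⟨j, Finset.mem_univ _, by positivity⟩⟩
  set g₁ : ℝ := 1 + ∑ i, (x₁ i)^2 with hg₁def
  have hg₁ : 0 < g₁ := by rw [hg₁def]; positivity
  set ε : ℝ := Real.exp (-(2*C)*T) * W₁ / (2 * Real.exp (K*T) * g₁) with hεdef
  have hε : 0 < ε := by
    rw [hεdef]
    have := Real.exp_pos (-(2*C)*T)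
    have := Real.exp_pos (K*T)
    positivity
  obtain ⟨v, hv_eq⟩ : ∃ v : (Fin 3 → ℝ) → ℝ → ℝ, ∀ x t, v x t =
      Real.exp (-(2*C)*t) * (∑ i, ∑ j, (Z x t i j)^2)
        - (ε * Real.exp (K*t)) * (1 + ∑ i, (x i)^2) := ⟨_, fun _ _ => rfl⟩
  have hεg : ε * (Real.exp (K*T) * g₁) = Real.exp (-(2*C)*T) * W₁ / 2 := by
    rw [hεdef]
    have h1 : Real.exp (K*T) ≠ 0 := (Real.exp_pos _).ne'
    have h2 : g₁ ≠ 0 := hg₁.ne'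
    field_simp
  have hv₁ : 0 < v x₁ t₁ := by
    rw [hv_eq]
    have e1 : Real.exp (-(2*C)*T) ≤ Real.exp (-(2*C)*t₁) :=
      Real.exp_le_exp.2 (by nlinarith [ht₁.1, ht₁.2])
    have e2 : Real.exp (K*t₁) ≤ Real.exp (K*T) :=
      Real.exp_le_exp.2 (mul_le_mul_of_nonneg_left ht₁.2 hK0)
    have e3 : (ε * Real.exp (K*t₁)) * g₁ ≤ ε * (Real.exp (K*T) * g₁) := by
      rw [mul_assoc]
      exact mul_le_mul_of_nonneg_left (mul_le_mul_of_nonneg_right e2 hg₁.le) hε.le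
    have e4 : Real.exp (-(2*C)*T) * W₁ ≤ Real.exp (-(2*C)*t₁) * W₁ :=
      mul_le_mul_of_nonneg_right e1 hW₁pos.le
    have e5 : 0 < Real.exp (-(2*C)*T) * W₁ := by positivity
    rw [← hW₁def, ← hg₁def]
    nlinarith [e3, e4, e5, hεg]
  set R : ℝ := Real.sqrt (B/ε) + ‖x₁‖ with hRdef
  have hR0 : (0:ℝ) ≤ R := add_nonneg (Real.sqrt_nonneg _) (norm_nonneg _)
  have hRB : B < ε * (1 + R^2) := by
    have h1 : Real.sqrt (B/ε) ≤ R := by rw [hRdef]; exact le_add_of_nonneg_right (norm_nonneg _)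
    have h2 : B/ε ≤ R^2 := by
      have := Real.sq_sqrt (div_nonneg hB0 hε.le)
      nlinarith [Real.sqrt_nonneg (B/ε)]
    have h3 : B ≤ ε * R^2 := by
      rw [div_le_iff₀ hε] at h2
      linarith [mul_comm ε (R^2)]
    nlinarith
  have hnormsq : ∀ x : Fin 3 → ℝ, ‖x‖^2 ≤ ∑ i, (x i)^2 := by
    intro x
    have h1 : ‖x‖ ≤ Real.sqrt (∑ i, (x i)^2) := by
      rw [pi_norm_le_iff_of_nonneg (Real.sqrt_nonneg _)]
      intro i
      rw [Real.norm_eq_abs, ← Real.sqrt_sq_eq_abs]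
      exact Real.sqrt_le_sqrt
        (Finset.single_le_sum (f := fun i => (x i)^2) (fun i _ => sq_nonneg _) (Finset.mem_univ i))
    have h2 := pow_le_pow_left₀ (norm_nonneg x) h1 2
    rwa [Real.sq_sqrt (show (0:ℝ) ≤ ∑ i, (x i)^2 by positivity)] at h2
  have hout : ∀ x : Fin 3 → ℝ, ∀ t ∈ Icc (0:ℝ) T, R < ‖x‖ → v x t < 0 := by
    intro x t ht hx
    rw [hv_eq]
    have hg : R^2 < ∑ i, (x i)^2 := by nlinarith [hnormsq x, hR0]
    have hW := hWB x t ht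
    have hWnn : (0:ℝ) ≤ ∑ i, ∑ j, (Z x t i j)^2 := by positivity
    have he1 : Real.exp (-(2*C)*t) ≤ 1 := Real.exp_le_one_iff.2 (by nlinarith [ht.1])
    have he2 : (1:ℝ) ≤ Real.exp (K*t) := Real.one_le_exp (mul_nonneg hK0 ht.1)
    have hA : Real.exp (-(2*C)*t) * (∑ i, ∑ j, (Z x t i j)^2) ≤ B := by
      calc Real.exp (-(2*C)*t) * (∑ i, ∑ j, (Z x t i j)^2)
          ≤ 1 * (∑ i, ∑ j, (Z x t i j)^2) := mul_le_mul_of_nonneg_right he1 hWnn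
        _ = ∑ i, ∑ j, (Z x t i j)^2 := one_mul _
        _ ≤ B := hW
    have hgx : (0:ℝ) ≤ 1 + ∑ i, (x i)^2 := by positivity
    have hB2 : ε * (1 + R^2) ≤ (ε * Real.exp (K*t)) * (1 + ∑ i, (x i)^2) := by
      have h1 : (1 + R^2) ≤ Real.exp (K*t) * (1 + ∑ i, (x i)^2) := by nlinarith
      calc ε * (1 + R^2) ≤ ε * (Real.exp (K*t) * (1 + ∑ i, (x i)^2)) :=
            mul_le_mul_of_nonneg_left h1 hε.le
        _ = (ε * Real.exp (K*t)) * (1 + ∑ i, (x i)^2) := by ring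
    linarith
  -- compact maximum
  set S : Set ((Fin 3 → ℝ) × ℝ) := Metric.closedBall (0 : Fin 3 → ℝ) R ×ˢ Icc (0:ℝ) T with hSdef
  have hScomp : IsCompact S := (isCompact_closedBall _ _).prod isCompact_Icc
  have hx₁S : (x₁, t₁) ∈ S := by
    refine ⟨mem_closedBall_zero_iff.2 ?_, ht₁⟩
    rw [hRdef]; exact le_add_of_nonneg_left (Real.sqrt_nonneg _)
  have hvcont : ContinuousOn (fun q : (Fin 3 → ℝ) × ℝ => v q.1 q.2) S := by
    have heq : ∀ q : (Fin 3 → ℝ) × ℝ, v q.1 q.2 =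
        Real.exp (-(2*C)*q.2) * (∑ i, ∑ j, (Z q.1 q.2 i j)^2)
          - (ε * Real.exp (K*q.2)) * (1 + ∑ i, (q.1 i)^2) := fun q => hv_eq q.1 q.2
    simp only [heq]
    apply ContinuousOn.sub
    · apply ContinuousOn.mul
      · exact (Real.continuous_exp.comp (continuous_const.mul continuous_snd)).continuousOn
      · apply continuousOn_finset_sum; intro i _
        apply continuousOn_finset_sum; intro j _
        exact ((hZ_cont i j).mono (fun q hq => ⟨mem_univ _, hq.2⟩)).pow 2
    · apply ContinuousOn.mul
      · exact (continuous_const.mul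
          (Real.continuous_exp.comp (continuous_const.mul continuous_snd))).continuousOn
      · apply Continuous.continuousOn
        apply continuous_const.add
        apply continuous_finset_sum; intro i _
        exact ((continuous_apply i).comp continuous_fst).pow 2
  obtain ⟨⟨x₀, t₀⟩, hq₀S, hq₀max⟩ := hScomp.exists_isMaxOn ⟨(x₁, t₁), hx₁S⟩ hvcont
  have hx₀ : ‖x₀‖ ≤ R := mem_closedBall_zero_iff.1 hq₀S.1
  have ht₀mem : t₀ ∈ Icc (0:ℝ) T := hq₀S.2
  have hvmax : 0 < v x₀ t₀ := lt_of_lt_of_le hv₁ (hq₀max hx₁S)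
  have hglob : ∀ x, ∀ t ∈ Icc (0:ℝ) T, v x t ≤ v x₀ t₀ := by
    intro x t ht
    by_cases hx : ‖x‖ ≤ R
    · exact hq₀max (show (x, t) ∈ S from ⟨mem_closedBall_zero_iff.2 hx, ht⟩)
    · exact le_of_lt (lt_trans (hout x t ht (lt_of_not_ge hx)) hvmax)
  have ht₀pos : 0 < t₀ := by
    rcases ht₀mem.1.lt_or_eq with h | h
    · exact h
    · exfalso
      have hz : v x₀ t₀ ≤ 0 := by
        rw [← h, hv_eq]
        have hzero : (∑ i, ∑ j, (Z x₀ 0 i j)^2) = (0:ℝ) := by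
          simp [hZ_init]
        rw [hzero, mul_zero, zero_sub, neg_nonpos]
        positivity
      linarith
  have ht₀ : t₀ ∈ Ioc (0:ℝ) T := ⟨ht₀pos, ht₀mem.2⟩
  -- time derivative at the maximum
  have hZt : ∀ i j : Fin 3, HasDerivWithinAt (fun s => Z x₀ s i j)
      (derivWithin (fun s => Z x₀ s i j) (Iic T) t₀) (Iic T) t₀ :=
    fun i j => (hζ x₀ i j t₀ ht₀).hasDerivWithinAt
  have hlin1 : HasDerivAt (fun t : ℝ => -(2*C)*t) (-(2*C)) t₀ := by
    simpa using (hasDerivAt_id t₀).const_mul (-(2*C))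
  have hlin2 : HasDerivAt (fun t : ℝ => K*t) K t₀ := by
    simpa using (hasDerivAt_id t₀).const_mul K
  have hexp1 : HasDerivAt (fun t => Real.exp (-(2*C)*t)) (Real.exp (-(2*C)*t₀) * -(2*C)) t₀ :=
    hlin1.exp
  have hsumt : HasDerivWithinAt (fun t => ∑ i, ∑ j, (Z x₀ t i j)^2)
      (∑ i, ∑ j, 2 * Z x₀ t₀ i j ^ 1 * derivWithin (fun s => Z x₀ s i j) (Iic T) t₀)
      (Iic T) t₀ := by
    apply HasDerivWithinAt.fun_sum; intro i _
    apply HasDerivWithinAt.fun_sum; intro j _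
    simpa using (hZt i j).fun_pow 2
  have hexp2 : HasDerivAt (fun t => (ε * Real.exp (K*t)) * (1 + ∑ i, (x₀ i)^2))
      ((ε * (Real.exp (K*t₀) * K)) * (1 + ∑ i, (x₀ i)^2)) t₀ :=
    ((hlin2.exp).const_mul ε).mul_const _
  have hψ : HasDerivWithinAt (v x₀)
      ((Real.exp (-(2*C)*t₀) * -(2*C)) * (∑ i, ∑ j, (Z x₀ t₀ i j)^2)
        + Real.exp (-(2*C)*t₀) * (∑ i, ∑ j, 2 * Z x₀ t₀ i j ^ 1
            * derivWithin (fun s => Z x₀ s i j) (Iic T) t₀)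
        - (ε * (Real.exp (K*t₀) * K)) * (1 + ∑ i, (x₀ i)^2)) (Iic T) t₀ := by
    have hfeq : (v x₀) = fun t => Real.exp (-(2*C)*t) * (∑ i, ∑ j, (Z x₀ t i j)^2)
        - (ε * Real.exp (K*t)) * (1 + ∑ i, (x₀ i)^2) := funext fun t => hv_eq x₀ t
    rw [hfeq]
    exact (hexp1.hasDerivWithinAt.mul hsumt).sub hexp2.hasDerivWithinAt
  have hdd0 := deriv_left_nonneg ht₀pos ht₀mem.2 hψ (fun t ht => hglob x₀ t ht)
  have eD : (∑ i, ∑ j, 2 * Z x₀ t₀ i j ^ 1 * derivWithin (fun s => Z x₀ s i j) (Iic T) t₀)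
      = 2 * ∑ i, ∑ j, Z x₀ t₀ i j * derivWithin (fun s => Z x₀ s i j) (Iic T) t₀ := by
    rw [← sum33_mul]
    exact Finset.sum_congr rfl fun i _ => Finset.sum_congr rfl fun j _ => by ring
  rw [eD] at hdd0
  -- spatial first and second order conditions at the maximum
  have hφt : ∀ i j, ContDiff ℝ (⊤:ℕ∞) (fun y => Z y t₀ i j) := hφs t₀ ht₀
  obtain ⟨hkey1, hkey2⟩ := key_spatial (fun i j y => Z y t₀ i j) hφt
      (Real.exp (-(2*C)*t₀)) (ε * Real.exp (K*t₀)) x₀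
      (by
        intro y
        have h := hglob y t₀ ht₀mem
        rw [hv_eq, hv_eq] at h
        exact h)
  have hkey1' : ∀ k, Real.exp (-(2*C)*t₀)
      * (∑ i, ∑ j, 2 * Z x₀ t₀ i j * pd k (fun y => Z y t₀ i j) x₀)
      - (ε * Real.exp (K*t₀)) * (2 * x₀ k) = 0 := hkey1
  have hkey2' : ∀ k, Real.exp (-(2*C)*t₀)
      * (∑ i, ∑ j, (2 * pd k (fun y => Z y t₀ i j) x₀ * pd k (fun y => Z y t₀ i j) x₀
          + 2 * Z x₀ t₀ i j * pd k (fun y => pd k (fun y' => Z y' t₀ i j) y) x₀))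
      - (ε * Real.exp (K*t₀)) * 2 ≤ 0 := hkey2
  -- rewrite first order conditions
  have cF2 : ∀ k, Real.exp (-(2*C)*t₀)
      * (2 * ∑ i, ∑ j, Z x₀ t₀ i j * pd k (fun y => Z y t₀ i j) x₀)
      - (ε * Real.exp (K*t₀)) * (2 * x₀ k) = 0 := by
    intro k
    have e2 : (∑ i, ∑ j, 2 * Z x₀ t₀ i j * pd k (fun y => Z y t₀ i j) x₀)
        = 2 * ∑ i, ∑ j, Z x₀ t₀ i j * pd k (fun y => Z y t₀ i j) x₀ := by
      rw [← sum33_mul]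
      exact Finset.sum_congr rfl fun i _ => Finset.sum_congr rfl fun j _ => by ring
    rw [← e2]
    exact hkey1' k
  have cU : Real.exp (-(2*C)*t₀)
      * (∑ k, u x₀ t₀ k * (∑ i, ∑ j, Z x₀ t₀ i j * pd k (fun y => Z y t₀ i j) x₀))
      = (ε * Real.exp (K*t₀)) * (∑ k, u x₀ t₀ k * x₀ k) := by
    rw [Finset.mul_sum, Finset.mul_sum]
    refine Finset.sum_congr rfl fun k _ => ?_
    linear_combination (u x₀ t₀ k / 2) * cF2 k
  -- sum over k of second order conditions
  have cF3 : ∑ k, (Real.exp (-(2*C)*t₀)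
      * (∑ i, ∑ j, (2 * pd k (fun y => Z y t₀ i j) x₀ * pd k (fun y => Z y t₀ i j) x₀
          + 2 * Z x₀ t₀ i j * pd k (fun y => pd k (fun y' => Z y' t₀ i j) y) x₀))
      - (ε * Real.exp (K*t₀)) * 2) ≤ 0 :=
    Finset.sum_nonpos fun k _ => hkey2' k
  have e3a : ∀ k : Fin 3, (∑ i, ∑ j, (2 * pd k (fun y => Z y t₀ i j) x₀ * pd k (fun y => Z y t₀ i j) x₀
          + 2 * Z x₀ t₀ i j * pd k (fun y => pd k (fun y' => Z y' t₀ i j) y) x₀))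
      = 2 * (∑ i, ∑ j, (pd k (fun y => Z y t₀ i j) x₀)^2)
        + 2 * (∑ i, ∑ j, Z x₀ t₀ i j * pd k (fun y => pd k (fun y' => Z y' t₀ i j) y) x₀) := by
    intro k
    calc (∑ i, ∑ j, (2 * pd k (fun y => Z y t₀ i j) x₀ * pd k (fun y => Z y t₀ i j) x₀
          + 2 * Z x₀ t₀ i j * pd k (fun y => pd k (fun y' => Z y' t₀ i j) y) x₀))
        = ∑ i, ∑ j, (2 * ((pd k (fun y => Z y t₀ i j) x₀)^2)
            + 2 * (Z x₀ t₀ i j * pd k (fun y => pd k (fun y' => Z y' t₀ i j) y) x₀)) :=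
          Finset.sum_congr rfl fun i _ => Finset.sum_congr rfl fun j _ => by ring
      _ = (∑ i, ∑ j, 2 * ((pd k (fun y => Z y t₀ i j) x₀)^2))
            + ∑ i, ∑ j, 2 * (Z x₀ t₀ i j * pd k (fun y => pd k (fun y' => Z y' t₀ i j) y) x₀) :=
          sum33_add _ _
      _ = 2 * (∑ i, ∑ j, (pd k (fun y => Z y t₀ i j) x₀)^2)
            + 2 * (∑ i, ∑ j, Z x₀ t₀ i j * pd k (fun y => pd k (fun y' => Z y' t₀ i j) y) x₀) := by
          rw [sum33_mul, sum33_mul]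
  have hlapfold : ∀ i j : Fin 3, (∑ k, Z x₀ t₀ i j * pd k (fun y => pd k (fun y' => Z y' t₀ i j) y) x₀)
      = Z x₀ t₀ i j * lap (fun y => Z y t₀ i j) x₀ := by
    intro i j
    rw [lap, Finset.mul_sum]
  have cF3' : 2 * Real.exp (-(2*C)*t₀) * (∑ k, ∑ i, ∑ j, (pd k (fun y => Z y t₀ i j) x₀)^2)
      + 2 * Real.exp (-(2*C)*t₀) * (∑ i, ∑ j, Z x₀ t₀ i j * lap (fun y => Z y t₀ i j) x₀)
      - 6 * (ε * Real.exp (K*t₀)) ≤ 0 := by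
    have h1 : ∀ k : Fin 3, (Real.exp (-(2*C)*t₀)
        * (∑ i, ∑ j, (2 * pd k (fun y => Z y t₀ i j) x₀ * pd k (fun y => Z y t₀ i j) x₀
            + 2 * Z x₀ t₀ i j * pd k (fun y => pd k (fun y' => Z y' t₀ i j) y) x₀))
        - (ε * Real.exp (K*t₀)) * 2)
        = 2 * Real.exp (-(2*C)*t₀) * (∑ i, ∑ j, (pd k (fun y => Z y t₀ i j) x₀)^2)
          + 2 * Real.exp (-(2*C)*t₀) * (∑ i, ∑ j, Z x₀ t₀ i j
              * pd k (fun y => pd k (fun y' => Z y' t₀ i j) y) x₀)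
          - 2 * (ε * Real.exp (K*t₀)) := fun k => by rw [e3a k]; ring
    rw [Finset.sum_congr rfl (fun k _ => h1 k)] at cF3
    have h2 : (∑ k, (2 * Real.exp (-(2*C)*t₀) * (∑ i, ∑ j, (pd k (fun y => Z y t₀ i j) x₀)^2)
          + 2 * Real.exp (-(2*C)*t₀) * (∑ i, ∑ j, Z x₀ t₀ i j
              * pd k (fun y => pd k (fun y' => Z y' t₀ i j) y) x₀)
          - 2 * (ε * Real.exp (K*t₀))))
        = 2 * Real.exp (-(2*C)*t₀) * (∑ k, ∑ i, ∑ j, (pd k (fun y => Z y t₀ i j) x₀)^2)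
          + 2 * Real.exp (-(2*C)*t₀) * (∑ k, ∑ i, ∑ j, Z x₀ t₀ i j
              * pd k (fun y => pd k (fun y' => Z y' t₀ i j) y) x₀)
          - 6 * (ε * Real.exp (K*t₀)) := by
      rw [Finset.sum_sub_distrib, Finset.sum_add_distrib, ← Finset.mul_sum, ← Finset.mul_sum]
      simp [Finset.sum_const, Finset.card_univ]
      ring
    rw [h2] at cF3
    have h3 : (∑ k, ∑ i, ∑ j, Z x₀ t₀ i j * pd k (fun y => pd k (fun y' => Z y' t₀ i j) y) x₀)
        = ∑ i, ∑ j, Z x₀ t₀ i j * lap (fun y => Z y t₀ i j) x₀ := by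
      rw [sum_swap_313]
      exact Finset.sum_congr rfl fun i _ => Finset.sum_congr rfl fun j _ => hlapfold i j
    rw [h3] at cF3
    exact cF3
  -- the differential inequality, via Cauchy–Schwarz
  obtain ⟨G, hG⟩ : ∃ G : Fin 3 → Fin 3 → ℝ, ∀ i j, G i j =
      derivWithin (fun s => Z x₀ s i j) (Iic T) t₀
        + (∑ k, u x₀ t₀ k * pd k (fun y => Z y t₀ i j) x₀)
        - ν * lap (fun y => Z y t₀ i j) x₀ := ⟨_, fun _ _ => rfl⟩
  have hineq' : Real.sqrt (∑ i, ∑ j, (G i j)^2)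
      ≤ C * Real.sqrt (∑ i, ∑ j, (Z x₀ t₀ i j)^2) := by
    simp only [hG]
    have h := hZ_ineq x₀ t₀ ht₀
    simpa only [frobNorm, Matrix.of_apply] using h
  have hW0nn : (0:ℝ) ≤ ∑ i, ∑ j, (Z x₀ t₀ i j)^2 := by positivity
  have hSaG_le : (∑ i, ∑ j, Z x₀ t₀ i j * G i j) ≤ C * (∑ i, ∑ j, (Z x₀ t₀ i j)^2) := by
    have hCSsq := Finset.sum_mul_sq_le_sq_mul_sq Finset.univ
      (fun p : Fin 3 × Fin 3 => Z x₀ t₀ p.1 p.2) (fun p : Fin 3 × Fin 3 => G p.1 p.2)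
    simp only [Fintype.sum_prod_type] at hCSsq
    have h1 : (∑ i, ∑ j, Z x₀ t₀ i j * G i j)
        ≤ Real.sqrt ((∑ i, ∑ j, (Z x₀ t₀ i j)^2) * (∑ i, ∑ j, (G i j)^2)) := by
      calc (∑ i, ∑ j, Z x₀ t₀ i j * G i j) ≤ |∑ i, ∑ j, Z x₀ t₀ i j * G i j| := le_abs_self _
        _ = Real.sqrt ((∑ i, ∑ j, Z x₀ t₀ i j * G i j)^2) := (Real.sqrt_sq_eq_abs _).symm
        _ ≤ Real.sqrt ((∑ i, ∑ j, (Z x₀ t₀ i j)^2) * (∑ i, ∑ j, (G i j)^2)) :=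
            Real.sqrt_le_sqrt hCSsq
    rw [Real.sqrt_mul hW0nn] at h1
    have h2 : Real.sqrt (∑ i, ∑ j, (Z x₀ t₀ i j)^2) * Real.sqrt (∑ i, ∑ j, (G i j)^2)
        ≤ Real.sqrt (∑ i, ∑ j, (Z x₀ t₀ i j)^2) * (C * Real.sqrt (∑ i, ∑ j, (Z x₀ t₀ i j)^2)) :=
      mul_le_mul_of_nonneg_left hineq' (Real.sqrt_nonneg _)
    have h3 := Real.mul_self_sqrt hW0nn
    nlinarith [Real.sqrt_nonneg (∑ i, ∑ j, (Z x₀ t₀ i j)^2)]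
  -- expansion of the Cauchy-Schwarz sum
  have hmid : ∑ i, ∑ j, Z x₀ t₀ i j * (∑ k, u x₀ t₀ k * pd k (fun y => Z y t₀ i j) x₀)
      = ∑ k, u x₀ t₀ k * (∑ i, ∑ j, Z x₀ t₀ i j * pd k (fun y => Z y t₀ i j) x₀) := by
    calc ∑ i, ∑ j, Z x₀ t₀ i j * (∑ k, u x₀ t₀ k * pd k (fun y => Z y t₀ i j) x₀)
        = ∑ i, ∑ j, ∑ k, u x₀ t₀ k * (Z x₀ t₀ i j * pd k (fun y => Z y t₀ i j) x₀) := by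
          refine Finset.sum_congr rfl fun i _ => Finset.sum_congr rfl fun j _ => ?_
          rw [Finset.mul_sum]
          exact Finset.sum_congr rfl fun k _ => by ring
      _ = ∑ k, ∑ i, ∑ j, u x₀ t₀ k * (Z x₀ t₀ i j * pd k (fun y => Z y t₀ i j) x₀) :=
          (sum_swap_313 _).symm
      _ = ∑ k, u x₀ t₀ k * (∑ i, ∑ j, Z x₀ t₀ i j * pd k (fun y => Z y t₀ i j) x₀) := by
          refine Finset.sum_congr rfl fun k _ => ?_
          rw [Finset.mul_sum]
          exact Finset.sum_congr rfl fun i _ => (Finset.mul_sum _ _ _).symm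
  have hexpand : (∑ i, ∑ j, Z x₀ t₀ i j * G i j)
      = (∑ i, ∑ j, Z x₀ t₀ i j * derivWithin (fun s => Z x₀ s i j) (Iic T) t₀)
        + (∑ k, u x₀ t₀ k * (∑ i, ∑ j, Z x₀ t₀ i j * pd k (fun y => Z y t₀ i j) x₀))
        - ν * (∑ i, ∑ j, Z x₀ t₀ i j * lap (fun y => Z y t₀ i j) x₀) := by
    simp only [hG]
    rw [← hmid]
    calc ∑ i, ∑ j, Z x₀ t₀ i j * (derivWithin (fun s => Z x₀ s i j) (Iic T) t₀
          + (∑ k, u x₀ t₀ k * pd k (fun y => Z y t₀ i j) x₀)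
          - ν * lap (fun y => Z y t₀ i j) x₀)
        = ∑ i, ∑ j, ((Z x₀ t₀ i j * derivWithin (fun s => Z x₀ s i j) (Iic T) t₀
            + Z x₀ t₀ i j * (∑ k, u x₀ t₀ k * pd k (fun y => Z y t₀ i j) x₀))
            - ν * (Z x₀ t₀ i j * lap (fun y => Z y t₀ i j) x₀)) :=
          Finset.sum_congr rfl fun i _ => Finset.sum_congr rfl fun j _ => by ring
      _ = (∑ i, ∑ j, (Z x₀ t₀ i j * derivWithin (fun s => Z x₀ s i j) (Iic T) t₀
            + Z x₀ t₀ i j * (∑ k, u x₀ t₀ k * pd k (fun y => Z y t₀ i j) x₀)))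
            - ∑ i, ∑ j, ν * (Z x₀ t₀ i j * lap (fun y => Z y t₀ i j) x₀) := sum33_sub _ _
      _ = (∑ i, ∑ j, Z x₀ t₀ i j * derivWithin (fun s => Z x₀ s i j) (Iic T) t₀)
            + (∑ i, ∑ j, Z x₀ t₀ i j * (∑ k, u x₀ t₀ k * pd k (fun y => Z y t₀ i j) x₀))
            - ν * (∑ i, ∑ j, Z x₀ t₀ i j * lap (fun y => Z y t₀ i j) x₀) := by
          rw [sum33_add, sum33_mul]
  -- lower bound for the zeroth order coefficient
  have hg0nn : (0:ℝ) ≤ ∑ i, (x₀ i)^2 := by positivity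
  have hU : -(3*Cu^2 + ∑ i, (x₀ i)^2) ≤ 2*(∑ k, u x₀ t₀ k * x₀ k) := by
    have h5k : ∀ k, -(Cu^2 + (x₀ k)^2) ≤ 2*(u x₀ t₀ k * x₀ k) := by
      intro k
      have h1 := hCu x₀ t₀ ht₀mem k
      have h2 : (u x₀ t₀ k)^2 ≤ Cu^2 := by
        nlinarith [abs_nonneg (u x₀ t₀ k), sq_abs (u x₀ t₀ k)]
      nlinarith [sq_nonneg (u x₀ t₀ k + x₀ k)]
    have hsum := Finset.sum_le_sum (fun k (_ : k ∈ Finset.univ) => h5k k)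
    have e1 : ∑ k : Fin 3, -(Cu^2 + (x₀ k)^2) = -(3*Cu^2 + ∑ i, (x₀ i)^2) := by
      rw [Finset.sum_neg_distrib, Finset.sum_add_distrib]
      simp [Finset.sum_const, Finset.card_univ]
    have e2 : ∑ k : Fin 3, 2*(u x₀ t₀ k * x₀ k) = 2*(∑ k, u x₀ t₀ k * x₀ k) := by
      rw [Finset.mul_sum]
    rw [e1, e2] at hsum
    exact hsum
  have hF5 : 1 ≤ K*(1 + ∑ i, (x₀ i)^2) + 2*(∑ k, u x₀ t₀ k * x₀ k) - 6*ν := by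
    rw [hK_def]
    nlinarith [hU, hg0nn, hCu0, hν, mul_nonneg (sq_nonneg Cu) hg0nn, mul_nonneg hν.le hg0nn]
  -- final contradiction
  have hE : (0:ℝ) < Real.exp (-(2*C)*t₀) := Real.exp_pos _
  have hFp : (0:ℝ) < ε * Real.exp (K*t₀) := mul_pos hε (Real.exp_pos _)
  have hSPnn : (0:ℝ) ≤ ∑ k, ∑ i, ∑ j, (pd k (fun y => Z y t₀ i j) x₀)^2 :=
    Finset.sum_nonneg fun k _ => Finset.sum_nonneg fun i _ =>
      Finset.sum_nonneg fun j _ => sq_nonneg _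
  have s1 : (2*Real.exp (-(2*C)*t₀)) * (∑ i, ∑ j, Z x₀ t₀ i j * G i j)
      ≤ (2*Real.exp (-(2*C)*t₀)) * (C * (∑ i, ∑ j, (Z x₀ t₀ i j)^2)) :=
    mul_le_mul_of_nonneg_left hSaG_le (by positivity)
  have s2 : (2*Real.exp (-(2*C)*t₀)) * (∑ i, ∑ j, Z x₀ t₀ i j * G i j)
      = (2*Real.exp (-(2*C)*t₀)) * (∑ i, ∑ j, Z x₀ t₀ i j * derivWithin (fun s => Z x₀ s i j) (Iic T) t₀)
        + (2*(ε * Real.exp (K*t₀))) * (∑ k, u x₀ t₀ k * x₀ k)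
        - (2*ν) * (Real.exp (-(2*C)*t₀) * (∑ i, ∑ j, Z x₀ t₀ i j * lap (fun y => Z y t₀ i j) x₀)) := by
    linear_combination (2*Real.exp (-(2*C)*t₀)) * hexpand + 2 * cU
  have s3 : ν * (2 * Real.exp (-(2*C)*t₀) * (∑ k, ∑ i, ∑ j, (pd k (fun y => Z y t₀ i j) x₀)^2)
      + 2 * Real.exp (-(2*C)*t₀) * (∑ i, ∑ j, Z x₀ t₀ i j * lap (fun y => Z y t₀ i j) x₀)
      - 6 * (ε * Real.exp (K*t₀))) ≤ 0 := by
    have := mul_le_mul_of_nonneg_left cF3' hν.le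
    simpa using this
  have s4 : (ε * Real.exp (K*t₀)) * 1
      ≤ (ε * Real.exp (K*t₀)) * (K*(1 + ∑ i, (x₀ i)^2) + 2*(∑ k, u x₀ t₀ k * x₀ k) - 6*ν) :=
    mul_le_mul_of_nonneg_left hF5 hFp.le
  have hSP2 : (0:ℝ) ≤ ν * (2 * Real.exp (-(2*C)*t₀)
      * (∑ k, ∑ i, ∑ j, (pd k (fun y => Z y t₀ i j) x₀)^2)) :=
    mul_nonneg hν.le (mul_nonneg (by positivity) hSPnn)
  linarith [hdd0, s1, s2, s3, s4, hSP2, hFp]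
end
end

section
/- Let u : ℝ³ → ℝ³ be C^∞ and compactly supported with div u = 0. Then ∫_{ℝ³} Δu · (u·∇)u dx = − Σ_{i=1}^{3} ∫_{ℝ³} ∂_i u · ((∂_i u)·∇)u dx, and consequently |∫_{ℝ³} Δu · (u·∇)u dx| ≤ ∫_{ℝ³} |∇u|³ dx = ‖∇u‖_{L³}³, where |∇u| denotes the Frobenius norm of the Jacobian matrix of u. -/
open Set MeasureTheory

noncomputable section

/-- Frobenius norm of the Jacobian `∇u` at a point. -/
def gradNorm (f : (Fin 3 → ℝ) → (Fin 3 → ℝ)) (x : Fin 3 → ℝ) : ℝ :=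
  Real.sqrt (∑ i, ∑ j, (pd j (fun y => f y i) x) ^ 2)

lemma pd_contDiff {φ : (Fin 3 → ℝ) → ℝ} (hφ : ContDiff ℝ (⊤ : ℕ∞) φ) (j : Fin 3) :
    ContDiff ℝ (⊤ : ℕ∞) (pd j φ) :=
  (hφ.fderiv_right (by simp)).clm_apply contDiff_const

lemma pd_compSupp {φ : (Fin 3 → ℝ) → ℝ} (hφ : HasCompactSupport φ) (j : Fin 3) :
    HasCompactSupport (pd j φ) :=
  hφ.fderiv_apply (𝕜 := ℝ) (Pi.single j 1)

lemma pd_mul {f g : (Fin 3 → ℝ) → ℝ} (hf : Differentiable ℝ f) (hg : Differentiable ℝ g)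
    (j : Fin 3) (x : Fin 3 → ℝ) :
    pd j (fun y => f y * g y) x = pd j f x * g x + f x * pd j g x := by
  simp only [pd, fderiv_fun_mul (hf x) (hg x)]
  simp only [ContinuousLinearMap.add_apply, ContinuousLinearMap.coe_smul', Pi.smul_apply,
    smul_eq_mul]
  ring

lemma pd_sum {f : Fin 3 → (Fin 3 → ℝ) → ℝ} (hf : ∀ k, Differentiable ℝ (f k))
    (j : Fin 3) (x : Fin 3 → ℝ) :
    pd j (fun y => ∑ k, f k y) x = ∑ k, pd j (f k) x := by
  simp only [pd]
  rw [fderiv_fun_sum (fun k _ => (hf k x))]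
  simp

lemma pd_eq_snd {φ : (Fin 3 → ℝ) → ℝ} (hφ : ContDiff ℝ (⊤ : ℕ∞) φ) (i k : Fin 3) (x : Fin 3 → ℝ) :
    pd i (pd k φ) x = fderiv ℝ (fderiv ℝ φ) x (Pi.single i 1) (Pi.single k 1) := by
  have hd : Differentiable ℝ (fderiv ℝ φ) := (hφ.fderiv_right (m := 1) (by rw [show (1 + 1 : WithTop ℕ∞) = ((2 : ℕ∞) : WithTop ℕ∞) by norm_num]; exact WithTop.coe_le_coe.2 le_top)).differentiable one_ne_zero
  have h := fderiv_clm_apply (𝕜 := ℝ) (c := fderiv ℝ φ) (u := fun _ => Pi.single k (1:ℝ))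
    (hd x) (differentiableAt_const _)
  have : pd i (pd k φ) x = fderiv ℝ (fun y => (fderiv ℝ φ y) (Pi.single k (1:ℝ))) x
      (Pi.single i 1) := rfl
  rw [this, h]
  simp

lemma pd_comm {φ : (Fin 3 → ℝ) → ℝ} (hφ : ContDiff ℝ (⊤ : ℕ∞) φ) (i k : Fin 3) (x : Fin 3 → ℝ) :
    pd i (pd k φ) x = pd k (pd i φ) x := by
  rw [pd_eq_snd hφ i k, pd_eq_snd hφ k i]
  exact (hφ.contDiffAt.isSymmSndFDerivAt (by rw [minSmoothness_of_isRCLikeNormedField, show (2 : WithTop ℕ∞) = ((2 : ℕ∞) : WithTop ℕ∞) by norm_num]; exact WithTop.coe_le_coe.2 le_top)) _ _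

lemma ibp {f g : (Fin 3 → ℝ) → ℝ} (hf : ContDiff ℝ (⊤ : ℕ∞) f) (hg : ContDiff ℝ (⊤ : ℕ∞) g)
    (hsf : HasCompactSupport f) (j : Fin 3) :
    ∫ x : Fin 3 → ℝ, f x * pd j g x = - ∫ x : Fin 3 → ℝ, pd j f x * g x := by
  have h1 : Integrable (fun x => pd j f x * g x) :=
    ((pd_contDiff hf j).continuous.mul hg.continuous).integrable_of_hasCompactSupport
      ((pd_compSupp hsf j).mul_right)
  have h2 : Integrable (fun x => f x * pd j g x) :=
    (hf.continuous.mul (pd_contDiff hg j).continuous).integrable_of_hasCompactSupport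
      (hsf.mul_right)
  have h3 : Integrable (fun x => f x * g x) :=
    (hf.continuous.mul hg.continuous).integrable_of_hasCompactSupport (hsf.mul_right)
  exact integral_mul_fderiv_eq_neg_fderiv_mul_of_integrable h1 h2 h3
    (fun x _ => hf.differentiable (by simp) x) (fun x _ => hg.differentiable (by simp) x)

lemma nice_sum3 {f : Fin 3 → (Fin 3 → ℝ) → ℝ} (h : ∀ k, ContDiff ℝ (⊤ : ℕ∞) (f k))
    (hs : ∀ k, HasCompactSupport (f k)) :
    ContDiff ℝ (⊤ : ℕ∞) (fun x => ∑ k, f k x) ∧ HasCompactSupport (fun x => ∑ k, f k x) := by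
  constructor
  · exact ContDiff.sum (fun k _ => h k)
  · have : (fun x => ∑ k, f k x) = (f 0 + f 1 + f 2) := by
      ext x; simp [Fin.sum_univ_three]
    rw [this]
    exact ((hs 0).add (hs 1)).add (hs 2)

lemma nice_integrable {f : (Fin 3 → ℝ) → ℝ} (h : Continuous f) (hs : HasCompactSupport f) :
    Integrable f (volume : Measure (Fin 3 → ℝ)) :=
  h.integrable_of_hasCompactSupport hs

lemma integrable_mul {f g : (Fin 3 → ℝ) → ℝ} (hf : Continuous f) (hg : Continuous g)
    (hsf : HasCompactSupport f) :
    Integrable (fun x => f x * g x) (volume : Measure (Fin 3 → ℝ)) :=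
  (hf.mul hg).integrable_of_hasCompactSupport hsf.mul_right

lemma integral_sum3 (F : Fin 3 → (Fin 3 → ℝ) → ℝ)
    (h : ∀ i, Integrable (F i) (volume : Measure (Fin 3 → ℝ))) :
    ∫ x : Fin 3 → ℝ, ∑ i, F i x = ∑ i, ∫ x : Fin 3 → ℝ, F i x :=
  integral_finset_sum _ fun i _ => h i

lemma cube_bound (a : Fin 3 → Fin 3 → ℝ) :
    |∑ i, ∑ j, a i j * (∑ k, a i k * a k j)|
      ≤ Real.sqrt (∑ i, ∑ j, a i j ^ 2) ^ 3 := by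
  set S : ℝ := ∑ i, ∑ j, a i j ^ 2 with hS
  have hS0 : 0 ≤ S := Finset.sum_nonneg fun i _ => Finset.sum_nonneg fun j _ => sq_nonneg _
  set b : Fin 3 → Fin 3 → ℝ := fun i k => ∑ j, a i j * a k j with hb
  have h1 : (∑ i, ∑ j, a i j * (∑ k, a i k * a k j)) = ∑ i, ∑ k, a i k * b i k := by
    apply Finset.sum_congr rfl; intro i _
    simp only [hb, Finset.mul_sum]
    rw [Finset.sum_comm]
    exact Finset.sum_congr rfl fun k _ => Finset.sum_congr rfl fun j _ => by ring
  have h2 : (∑ i, ∑ k, a i k * b i k) ^ 2 ≤ (∑ i, ∑ k, a i k ^ 2) * (∑ i, ∑ k, b i k ^ 2) := by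
    have := Finset.sum_mul_sq_le_sq_mul_sq (Finset.univ ×ˢ Finset.univ)
      (fun p : Fin 3 × Fin 3 => a p.1 p.2) (fun p => b p.1 p.2)
    simpa only [Finset.sum_product] using this
  have h3 : ∀ i k, b i k ^ 2 ≤ (∑ j, a i j ^ 2) * (∑ j, a k j ^ 2) := fun i k =>
    Finset.sum_mul_sq_le_sq_mul_sq Finset.univ (fun j => a i j) (fun j => a k j)
  have h4 : (∑ i, ∑ k, b i k ^ 2) ≤ S * S := by
    calc (∑ i, ∑ k, b i k ^ 2) ≤ ∑ i, ∑ k, (∑ j, a i j ^ 2) * (∑ j, a k j ^ 2) :=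
          Finset.sum_le_sum fun i _ => Finset.sum_le_sum fun k _ => h3 i k
      _ = S * S := by rw [hS, ← Finset.sum_mul_sum]
  have h5 : (∑ i, ∑ k, a i k * b i k) ^ 2 ≤ S * (S * S) :=
    h2.trans (mul_le_mul_of_nonneg_left h4 (by positivity))
  have h6 : |∑ i, ∑ k, a i k * b i k| ≤ Real.sqrt (S * (S * S)) := by
    rw [← Real.sqrt_sq_eq_abs]
    exact Real.sqrt_le_sqrt h5
  rw [h1]
  refine h6.trans_eq ?_
  rw [show S * (S * S) = Real.sqrt S ^ 2 * ((Real.sqrt S ^2) * (Real.sqrt S ^2)) by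
    rw [Real.sq_sqrt hS0]]
  rw [show Real.sqrt S ^ 2 * (Real.sqrt S ^ 2 * Real.sqrt S ^ 2) = (Real.sqrt S ^3)^2 by ring]
  exact Real.sqrt_sq (by positivity)

/-- Integration by parts for the convective term against the Laplacian:
`∫ Δu · (u·∇)u = − Σᵢ ∫ ∂ᵢu · ((∂ᵢu)·∇)u`, whence
`|∫ Δu · (u·∇)u| ≤ ∫ |∇u|³`. -/
theorem laplacian_convection_identity
    (u : (Fin 3 → ℝ) → (Fin 3 → ℝ))
    (hu_smooth : ContDiff ℝ (⊤ : ℕ∞) u)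
    (hu_supp : HasCompactSupport u)
    (hu_div : ∀ x : Fin 3 → ℝ, ∑ i, pd i (fun y => u y i) x = 0) :
    (∫ x : Fin 3 → ℝ, ∑ j, lap (fun y => u y j) x * (∑ k, u x k * pd k (fun y => u y j) x))
      = - ∑ i : Fin 3, ∫ x : Fin 3 → ℝ,
          ∑ j, pd i (fun y => u y j) x *
            (∑ k, pd i (fun y => u y k) x * pd k (fun y => u y j) x) ∧
    |∫ x : Fin 3 → ℝ, ∑ j, lap (fun y => u y j) x *
        (∑ k, u x k * pd k (fun y => u y j) x)|
      ≤ ∫ x : Fin 3 → ℝ, (gradNorm u x) ^ 3 := by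
  -- basic regularity facts
  have hU : ∀ j : Fin 3, ContDiff ℝ (⊤ : ℕ∞) (fun y => u y j) := fun j => contDiff_pi.1 hu_smooth j
  have hUs : ∀ j : Fin 3, HasCompactSupport (fun y => u y j) := fun j =>
    hu_supp.comp_left (g := fun v : Fin 3 → ℝ => v j) rfl
  have hdU : ∀ j, Differentiable ℝ (fun y => u y j) := fun j => (hU j).differentiable (by simp)
  have hA : ∀ i j, ContDiff ℝ (⊤ : ℕ∞) (pd i (fun y => u y j)) := fun i j => pd_contDiff (hU j) i
  have hAs : ∀ i j, HasCompactSupport (pd i (fun y => u y j)) := fun i j =>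
    pd_compSupp (hUs j) i
  have hAA : ∀ k i j, ContDiff ℝ (⊤ : ℕ∞) (pd k (pd i (fun y => u y j))) := fun k i j =>
    pd_contDiff (hA i j) k
  have hAAs : ∀ k i j, HasCompactSupport (pd k (pd i (fun y => u y j))) := fun k i j =>
    pd_compSupp (hAs i j) k
  -- the convection factor
  have hC : ∀ j, ContDiff ℝ (⊤ : ℕ∞) (fun x => ∑ k, u x k * pd k (fun y => u y j) x)
      ∧ HasCompactSupport (fun x => ∑ k, u x k * pd k (fun y => u y j) x) := fun j =>
    nice_sum3 (fun k => (hU k).mul (hA k j)) (fun k => (hUs k).mul_right)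
  -- expansion of the derivative of the convection factor
  have hpdC : ∀ (i j : Fin 3) (x : Fin 3 → ℝ),
      pd i (fun x => ∑ k, u x k * pd k (fun y => u y j) x) x
        = (∑ k, pd i (fun y => u y k) x * pd k (fun y => u y j) x)
          + ∑ k, u x k * pd k (pd i (fun y => u y j)) x := by
    intro i j x
    have e : pd i (fun y => ∑ k, u y k * pd k (fun y' => u y' j) y) x
        = ∑ k, pd i (fun y => u y k * pd k (fun y' => u y' j) y) x :=
      pd_sum (f := fun k y => u y k * pd k (fun y' => u y' j) y)
        (fun k => (hdU k).mul ((hA k j).differentiable (by simp))) i x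
    rw [e]
    have e2 : ∀ k : Fin 3, pd i (fun y => u y k * pd k (fun y' => u y' j) y) x
        = pd i (fun y => u y k) x * pd k (fun y' => u y' j) x
          + u x k * pd k (pd i (fun y => u y j)) x := by
      intro k
      rw [pd_mul (hdU k) ((hA k j).differentiable (by simp)) i x,
        pd_comm (hU j) i k x]
    rw [Finset.sum_congr rfl fun k _ => e2 k, Finset.sum_add_distrib]
  -- the cubic term vanishes
  have step3 : ∀ i j : Fin 3,
      ∫ x : Fin 3 → ℝ, pd i (fun y => u y j) x * (∑ k, u x k * pd k (pd i (fun y => u y j)) x)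
        = 0 := by
    intro i j
    set φ : (Fin 3 → ℝ) → ℝ := pd i (fun y => u y j) with hφdef
    have hφc : ContDiff ℝ (⊤ : ℕ∞) φ := hA i j
    have hφs : HasCompactSupport φ := hAs i j
    have hswap : ∫ x : Fin 3 → ℝ, φ x * (∑ k, u x k * pd k φ x)
        = ∑ k, ∫ x : Fin 3 → ℝ, φ x * (u x k * pd k φ x) := by
      rw [show (fun x : Fin 3 → ℝ => φ x * (∑ k, u x k * pd k φ x))
          = fun x => ∑ k, φ x * (u x k * pd k φ x) from funext fun x => Finset.mul_sum _ _ _]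
      exact integral_sum3 _ fun k => by
        have : Integrable (fun x => φ x * (u x k * pd k φ x)) :=
          integrable_mul hφc.continuous ((hU k).continuous.mul
            (pd_contDiff hφc k).continuous) hφs
        exact this
    have h2 : ∀ k : Fin 3, 2 * ∫ x : Fin 3 → ℝ, φ x * (u x k * pd k φ x)
        = - ∫ x : Fin 3 → ℝ, pd k (fun y => u y k) x * (φ x * φ x) := by
      intro k
      have key : ∫ x : Fin 3 → ℝ, u x k * pd k (fun y => φ y * φ y) x
          = - ∫ x : Fin 3 → ℝ, pd k (fun y => u y k) x * (φ x * φ x) :=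
        ibp (hU k) (hφc.mul hφc) (hUs k) k
      have expand : ∀ x, u x k * pd k (fun y => φ y * φ y) x
          = 2 * (φ x * (u x k * pd k φ x)) := by
        intro x
        rw [pd_mul (hφc.differentiable (by simp)) (hφc.differentiable (by simp)) k x]
        ring
      rw [← integral_const_mul]
      rw [show (fun x : Fin 3 → ℝ => 2 * (φ x * (u x k * pd k φ x)))
          = fun x => u x k * pd k (fun y => φ y * φ y) x from
        funext fun x => (expand x).symm]
      exact key
    have hsum0 : ∑ k : Fin 3, ∫ x : Fin 3 → ℝ, pd k (fun y => u y k) x * (φ x * φ x) = 0 := by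
      rw [← integral_sum3 _ (fun k => integrable_mul (hA k k).continuous
        (hφc.continuous.fun_mul hφc.continuous) (hAs k k))]
      rw [show (fun x : Fin 3 → ℝ => ∑ k, pd k (fun y => u y k) x * (φ x * φ x))
          = fun _ => (0:ℝ) from funext fun x => by
        rw [← Finset.sum_mul, hu_div x, zero_mul]]
      exact integral_zero _ _
    have : (2:ℝ) * ∫ x : Fin 3 → ℝ, φ x * (∑ k, u x k * pd k φ x) = 0 := by
      rw [hswap, Finset.mul_sum]
      rw [Finset.sum_congr rfl fun k _ => h2 k]
      rw [Finset.sum_neg_distrib, hsum0, neg_zero]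
    linarith
  -- integration by parts for each i, j
  have step1 : ∀ i j : Fin 3,
      ∫ x : Fin 3 → ℝ, pd i (pd i (fun y => u y j)) x * (∑ k, u x k * pd k (fun y => u y j) x)
        = - ∫ x : Fin 3 → ℝ, pd i (fun y => u y j) x *
            pd i (fun x => ∑ k, u x k * pd k (fun y => u y j) x) x := by
    intro i j
    have h := ibp (hA i j) (hC j).1 (hAs i j) i
    linarith
  -- combining: per (i,j) reduction
  have step4 : ∀ i j : Fin 3,
      ∫ x : Fin 3 → ℝ, pd i (pd i (fun y => u y j)) x * (∑ k, u x k * pd k (fun y => u y j) x)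
        = - ∫ x : Fin 3 → ℝ, pd i (fun y => u y j) x *
            (∑ k, pd i (fun y => u y k) x * pd k (fun y => u y j) x) := by
    intro i j
    rw [step1 i j]
    congr 1
    have hsplit : (fun x : Fin 3 → ℝ => pd i (fun y => u y j) x *
        pd i (fun x => ∑ k, u x k * pd k (fun y => u y j) x) x)
        = fun x => pd i (fun y => u y j) x *
            (∑ k, pd i (fun y => u y k) x * pd k (fun y => u y j) x)
          + pd i (fun y => u y j) x * (∑ k, u x k * pd k (pd i (fun y => u y j)) x) := by
      funext x
      rw [hpdC i j x]
      ring
    rw [hsplit]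
    rw [integral_add
      (integrable_mul (hA i j).continuous
        (continuous_finset_sum _ fun k _ => ((hA i k).continuous.fun_mul (hA k j).continuous))
        (hAs i j))
      (integrable_mul (hA i j).continuous
        (continuous_finset_sum _ fun k _ => ((hU k).continuous.fun_mul (hAA k i j).continuous))
        (hAs i j))]
    rw [step3 i j, add_zero]
  -- integrability facts
  have intIJ : ∀ i j : Fin 3, Integrable (fun x => pd i (pd i (fun y => u y j)) x *
      (∑ k, u x k * pd k (fun y => u y j) x)) (volume : Measure (Fin 3 → ℝ)) := fun i j =>
    integrable_mul (hAA i i j).continuous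
      (continuous_finset_sum _ fun k _ => ((hU k).continuous.mul (hA k j).continuous))
      (hAAs i i j)
  have intB : ∀ i j : Fin 3, Integrable (fun x => pd i (fun y => u y j) x *
      (∑ k, pd i (fun y => u y k) x * pd k (fun y => u y j) x))
      (volume : Measure (Fin 3 → ℝ)) := fun i j =>
    integrable_mul (hA i j).continuous
      (continuous_finset_sum _ fun k _ => ((hA i k).continuous.mul (hA k j).continuous))
      (hAs i j)
  have intBsum : ∀ i : Fin 3, Integrable (fun x => ∑ j, pd i (fun y => u y j) x *
      (∑ k, pd i (fun y => u y k) x * pd k (fun y => u y j) x))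
      (volume : Measure (Fin 3 → ℝ)) := fun i =>
    integrable_finset_sum _ fun j _ => intB i j
  -- the main identity
  have hlap : ∀ x : Fin 3 → ℝ,
      (∑ j, lap (fun y => u y j) x * (∑ k, u x k * pd k (fun y => u y j) x))
        = ∑ j, ∑ i, pd i (pd i (fun y => u y j)) x *
            (∑ k, u x k * pd k (fun y => u y j) x) :=
    fun x => Finset.sum_congr rfl fun j _ => by rw [lap, Finset.sum_mul]
  have main1 : (∫ x : Fin 3 → ℝ, ∑ j, lap (fun y => u y j) x *
        (∑ k, u x k * pd k (fun y => u y j) x))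
      = - ∑ i : Fin 3, ∫ x : Fin 3 → ℝ,
          ∑ j, pd i (fun y => u y j) x *
            (∑ k, pd i (fun y => u y k) x * pd k (fun y => u y j) x) := by
    calc (∫ x : Fin 3 → ℝ, ∑ j, lap (fun y => u y j) x *
          (∑ k, u x k * pd k (fun y => u y j) x))
        = ∫ x : Fin 3 → ℝ, ∑ j, ∑ i, pd i (pd i (fun y => u y j)) x *
            (∑ k, u x k * pd k (fun y => u y j) x) := by simp only [hlap]
      _ = ∑ j : Fin 3, ∑ i : Fin 3, ∫ x : Fin 3 → ℝ, pd i (pd i (fun y => u y j)) x *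
            (∑ k, u x k * pd k (fun y => u y j) x) := by
          rw [integral_sum3 _ (fun j => integrable_finset_sum _ fun i _ => intIJ i j)]
          exact Finset.sum_congr rfl fun j _ => integral_sum3 _ fun i => intIJ i j
      _ = ∑ j : Fin 3, ∑ i : Fin 3, - ∫ x : Fin 3 → ℝ, pd i (fun y => u y j) x *
            (∑ k, pd i (fun y => u y k) x * pd k (fun y => u y j) x) :=
          Finset.sum_congr rfl fun j _ => Finset.sum_congr rfl fun i _ => step4 i j
      _ = - ∑ i : Fin 3, ∑ j : Fin 3, ∫ x : Fin 3 → ℝ, pd i (fun y => u y j) x *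
            (∑ k, pd i (fun y => u y k) x * pd k (fun y => u y j) x) := by
          rw [Finset.sum_comm]
          simp only [Finset.sum_neg_distrib]
      _ = - ∑ i : Fin 3, ∫ x : Fin 3 → ℝ, ∑ j, pd i (fun y => u y j) x *
            (∑ k, pd i (fun y => u y k) x * pd k (fun y => u y j) x) := by
          congr 1
          exact Finset.sum_congr rfl fun i _ => (integral_sum3 _ fun j => intB i j).symm
  refine ⟨main1, ?_⟩
  -- the inequality
  rw [main1, abs_neg]
  rw [← integral_sum3 _ intBsum]
  have hptwise : ∀ x : Fin 3 → ℝ,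
      |∑ i : Fin 3, ∑ j, pd i (fun y => u y j) x *
        (∑ k, pd i (fun y => u y k) x * pd k (fun y => u y j) x)| ≤ gradNorm u x ^ 3 := by
    intro x
    have hcb := cube_bound (fun i j => pd i (fun y => u y j) x)
    refine hcb.trans_eq ?_
    rw [gradNorm]
    congr 1
    rw [Finset.sum_comm]
  have intF : Integrable (fun x : Fin 3 → ℝ => ∑ i : Fin 3, ∑ j,
      pd i (fun y => u y j) x *
        (∑ k, pd i (fun y => u y k) x * pd k (fun y => u y j) x))
      (volume : Measure (Fin 3 → ℝ)) :=
    integrable_finset_sum _ fun i _ => integrable_finset_sum _ fun j _ => intB i j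
  have hScont : Continuous (fun x : Fin 3 → ℝ =>
      ∑ i : Fin 3, ∑ j, (pd j (fun y => u y i) x) ^ 2) :=
    continuous_finset_sum _ fun i _ => continuous_finset_sum _ fun j _ =>
      ((hA j i).continuous.pow 2)
  have hScs : HasCompactSupport (fun x : Fin 3 → ℝ =>
      ∑ i : Fin 3, ∑ j, (pd j (fun y => u y i) x) ^ 2) := by
    refine (nice_sum3 (f := fun i x => ∑ j, (pd j (fun y => u y i) x) ^ 2) ?_ ?_).2
    · exact fun i => ContDiff.sum fun j _ => (hA j i).pow 2
    · intro i
      refine (nice_sum3 (f := fun j x => (pd j (fun y => u y i) x) ^ 2)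
        (fun j => (hA j i).pow 2) (fun j => ?_)).2
      exact (hAs j i).comp_left (g := fun t : ℝ => t ^ 2) (by simp)
  have intG : Integrable (fun x : Fin 3 → ℝ => gradNorm u x ^ 3)
      (volume : Measure (Fin 3 → ℝ)) := by
    refine nice_integrable ((Real.continuous_sqrt.comp hScont).pow 3) ?_
    exact hScs.comp_left (g := fun t : ℝ => Real.sqrt t ^ 3) (by simp)
  calc |∫ x : Fin 3 → ℝ, ∑ i : Fin 3, ∑ j, pd i (fun y => u y j) x *
        (∑ k, pd i (fun y => u y k) x * pd k (fun y => u y j) x)|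
      ≤ ∫ x : Fin 3 → ℝ, |∑ i : Fin 3, ∑ j, pd i (fun y => u y j) x *
        (∑ k, pd i (fun y => u y k) x * pd k (fun y => u y j) x)| := by
        simpa [Real.norm_eq_abs] using
          norm_integral_le_integral_norm (μ := (volume : Measure (Fin 3 → ℝ)))
            (f := fun x : Fin 3 → ℝ => ∑ i : Fin 3, ∑ j, pd i (fun y => u y j) x *
              (∑ k, pd i (fun y => u y k) x * pd k (fun y => u y j) x))
    _ ≤ ∫ x : Fin 3 → ℝ, gradNorm u x ^ 3 :=
        integral_mono intF.abs intG hptwise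
end
end
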